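/- Let (A_n, a_n) be an inverse sequence of abelian groups satisfying the Mittag-Leffler condition. Then lim¹ of the sequence is trivial, i.e. the map d : ∏_n A_n → ∏_n A_n given by d((x_n)) = (x_n − a_{n+1}(x_{n+1})) is surjective. -/
import Mathlib


/-- The composite bonding homomorphism `A (n + p) →+ A n` of an inverse sequence
of abelian groups with bonding maps `a n : A (n+1) →+ A n`. -/
def addBondComp {A : ℕ → Type*} [∀ n, AddCommGroup (A n)] (a : ∀ n, A (n + 1) →+ A n) :
    ∀ (p n : ℕ), A (n + p) →+ A n
  | 0, _ => AddMonoidHom.id _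
  | (p + 1), n => (addBondComp a p n).comp (a (n + p))

set_option linter.unusedSectionVars false

section aux
variable {A : ℕ → Type*} [∀ n, AddCommGroup (A n)] (a : ∀ n, A (n + 1) →+ A n)

lemma cast_fn (f : ∀ n, A n) {m m' : ℕ} (h : m = m') :
    _root_.cast (congrArg A h) (f m) = f m' := by subst h; rfl

lemma a_cast {m m' : ℕ} (h : m = m') (z : A (m + 1)) :
    a m' (_root_.cast (congrArg A (show m + 1 = m' + 1 by rw [h])) z)
      = _root_.cast (congrArg A h) (a m z) := by subst h; rfl

lemma addBondComp_shift : ∀ (p n : ℕ) (z : A (n + 1 + p)),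
    a n (addBondComp a p (n + 1) z)
      = addBondComp a (p + 1) n
          (_root_.cast (congrArg A (show n + 1 + p = n + (p + 1) by omega)) z) := by
  intro p
  induction p with
  | zero => intro n z; simp [addBondComp]
  | succ p ih =>
      intro n z
      calc a n (addBondComp a (p + 1) (n + 1) z)
          = a n (addBondComp a p (n + 1) (a (n + 1 + p) z)) := rfl
        _ = addBondComp a (p + 1) n
              (_root_.cast (congrArg A (show n + 1 + p = n + (p + 1) by omega))
                (a (n + 1 + p) z)) := ih n _
        _ = addBondComp a (p + 1) n
              (a (n + (p + 1))
                (_root_.cast (congrArg A (show n + 1 + p + 1 = n + (p + 1) + 1 by omega)) z)) := by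
              rw [a_cast a (show n + 1 + p = n + (p + 1) by omega) z]
        _ = addBondComp a (p + 1 + 1) n
              (_root_.cast (congrArg A (show n + 1 + (p + 1) = n + (p + 1 + 1) by omega)) z) := rfl

lemma cast_cast_fn {m m' : ℕ} (h : m = m') (h' : m' = m) (z : A m) :
    _root_.cast (congrArg A h') (_root_.cast (congrArg A h) z) = z := by subst h; rfl

end aux


/-- If an inverse sequence of abelian groups satisfies the Mittag-Leffler
condition, then its `lim¹` is trivial, i.e. the map
`d : ∏ₙ Aₙ → ∏ₙ Aₙ`, `d(x)ₙ = xₙ − aₙ(xₙ₊₁)`, is surjective. -/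
theorem stmt_3 {A : ℕ → Type*} [∀ n, AddCommGroup (A n)] (a : ∀ n, A (n + 1) →+ A n)
    (hML : ∀ n, ∃ N, ∀ p q, N ≤ p → N ≤ q →
      (addBondComp a p n).range = (addBondComp a q n).range) :
    Function.Surjective (fun (x : ∀ n, A n) => fun n => x n - a n (x (n + 1))) := by
  classical
  intro y
  choose Nf hNf using hML
  -- a monotone bound function
  let M : ℕ → ℕ := fun n => Nat.rec (Nf 0) (fun k ih => max (Nf (k + 1)) ih) n
  have hMN : ∀ n, Nf n ≤ M n := by
    intro n; cases n with
    | zero => exact le_refl _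
    | succ k => exact le_max_left _ _
  have hMmono : ∀ n, M n ≤ M (n + 1) := fun n => le_max_right _ _
  -- the stable image subgroup
  let B : ∀ n, AddSubgroup (A n) := fun n => (addBondComp a (M n) n).range
  have hB : ∀ n p, Nf n ≤ p → (addBondComp a p n).range = B n :=
    fun n p hp => hNf n p (M n) hp (hMN n)
  have hBmem : ∀ n p, Nf n ≤ p → ∀ z : A (n + p), addBondComp a p n z ∈ B n := by
    intro n p hp z
    rw [← hB n p hp]; exact ⟨z, rfl⟩
  -- terms of the telescoping sums
  set T : ∀ n, ℕ → A n := fun n i => addBondComp a i n (y (n + i)) with hT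
  have hT0 : ∀ n, T n 0 = y n := fun n => rfl
  -- the approximate solution
  set u : ∀ n, A n := fun n => ∑ i ∈ Finset.range (M n), T n i with hu
  -- the error term
  set v : ∀ n, A n := fun n => ∑ i ∈ Finset.Ico (M n) (M (n + 1) + 1), T n i with hv
  have hvB : ∀ n, v n ∈ B n := by
    intro n
    refine AddSubgroup.sum_mem _ (fun i hi => ?_)
    exact hBmem n i (le_trans (hMN n) (Finset.mem_Ico.1 hi).1) (y (n + i))
  -- the key telescoping identity
  have hTa : ∀ n i, a n (addBondComp a i (n + 1) (y (n + 1 + i))) = T n (i + 1) := by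
    intro n i
    rw [addBondComp_shift]
    exact congrArg _ (cast_fn y (show n + 1 + i = n + (i + 1) by omega))
  have key : ∀ n, u n - a n (u (n + 1)) = y n - v n := by
    intro n
    have h1 : a n (u (n + 1)) = ∑ i ∈ Finset.range (M (n + 1)), T n (i + 1) := by
      rw [hu, map_sum]
      exact Finset.sum_congr rfl (fun i _ => hTa n i)
    have h2 : ∑ i ∈ Finset.range (M (n + 1) + 1), T n i
        = (∑ i ∈ Finset.range (M (n + 1)), T n (i + 1)) + y n := by
      rw [Finset.sum_range_succ' (T n) (M (n + 1)), hT0]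
    have h3 : v n = (∑ i ∈ Finset.range (M (n + 1) + 1), T n i)
        - ∑ i ∈ Finset.range (M n), T n i := by
      rw [hv]
      exact Finset.sum_Ico_eq_sub _ (le_trans (hMmono n) (Nat.le_succ _))
    rw [h3, h2, h1]
    abel
  -- surjectivity of the bonding maps on the stable images
  have F2 : ∀ n (x : A n), x ∈ B n → ∃ w : A (n + 1), w ∈ B (n + 1) ∧ a n w = x := by
    intro n x hx
    set p : ℕ := max (Nf n) (Nf (n + 1)) with hp
    have hx' : x ∈ (addBondComp a (p + 1) n).range := by
      rw [hB n (p + 1) (le_trans (le_max_left _ _) (Nat.le_succ _))]; exact hx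
    obtain ⟨z, hz⟩ := hx'
    set z' : A (n + 1 + p) :=
      _root_.cast (congrArg A (show n + (p + 1) = n + 1 + p by omega)) z with hz'
    refine ⟨addBondComp a p (n + 1) z', hBmem (n + 1) p (le_max_right _ _) z', ?_⟩
    rw [addBondComp_shift, ← hz]
    congr 1
    rw [hz']
    exact cast_cast_fn (show n + (p + 1) = n + 1 + p by omega)
      (show n + 1 + p = n + (p + 1) by omega) z
  -- build the correcting sequence inside B by recursion + choice
  have step : ∀ n (x : {x : A n // x ∈ B n}),
      ∃ w : {w : A (n + 1) // w ∈ B (n + 1)}, a n w.1 = x.1 + v n := by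
    intro n x
    obtain ⟨w, hwB, hwa⟩ := F2 n (x.1 + v n) (AddSubgroup.add_mem _ x.2 (hvB n))
    exact ⟨⟨w, hwB⟩, hwa⟩
  let c : ∀ n, {x : A n // x ∈ B n} := fun n =>
    Nat.rec ⟨0, AddSubgroup.zero_mem _⟩ (fun k ih => Classical.choose (step k ih)) n
  have hc : ∀ n, a n (c (n + 1)).1 = (c n).1 + v n :=
    fun n => Classical.choose_spec (step n (c n))
  -- the solution
  refine ⟨fun n => u n - (c n).1, ?_⟩
  funext n
  show u n - (c n).1 - a n (u (n + 1) - (c (n + 1)).1) = y n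
  rw [map_sub, hc n]
  have h4 : u n - (c n).1 - (a n (u (n + 1)) - ((c n).1 + v n))
      = (u n - a n (u (n + 1))) + v n := by abel
  rw [h4, key n]
  abel
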